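/- Let u be a nonnegative heat extension on ℝⁿ × (0,∞) of a Radon measure μ, and suppose limsup_{r→0⁺} μ(B(x,r))/r^{n-α} = 0 at some point x, with α ∈ [0,n). Then limsup_{t→0⁺} t^{α/2} u(x,t) = 0, i.e. t^{α/2} u(x,t) → 0 as t → 0⁺. -/

import Mathlib

/-!
Split `∫ exp(-|x-ξ|²/4t) dμ(ξ)` at a small radius `r₀`. Inside `B(x, r₀)`, cover by the balls
`B(x, 2ᵏ√t)`: on the `k`-th dyadic shell the Gaussian is at most `exp((1 - 4ᵏ)/16)`, so the bound
`μ(B(x,r)) ≤ η r^β` for `r ≤ r₀` gives at most `η C_β t^(β/2)` with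
`C_β = ∑ₖ exp((1 - 4ᵏ)/16) 2^(kβ) < ∞`. Outside the ball the Gaussian is at most
`exp(-r₀²/8t)` times the integrable Gaussian at time `1/4`, which beats every power of `t`.
Thus `limsup t^(-β/2) ∫ … ≤ η C_β` for every `η > 0`, with `β = n - α`.
-/

open MeasureTheory Filter Metric Set

noncomputable def heatK (n : ℕ) (x : EuclideanSpace ℝ (Fin n)) (t : ℝ) : ℝ :=
  (4 * Real.pi * t) ^ (-(n : ℝ) / 2) * Real.exp (-‖x‖ ^ 2 / (4 * t))

open scoped Topology ENNReal

lemma exists_lt_two_pow_and_exp_le (s : ℝ) :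
    ∃ k : ℕ, s < 2 ^ k ∧ Real.exp (-s ^ 2 / 4) ≤ Real.exp ((1 - 4 ^ k) / 16) := by
  have hex : ∃ k : ℕ, s < 2 ^ k := pow_unbounded_of_one_lt s one_lt_two
  refine ⟨Nat.find hex, Nat.find_spec hex, Real.exp_le_exp.2 ?_⟩
  rcases h : Nat.find hex with _ | j
  · norm_num
    linarith [sq_nonneg s]
  · have hjs : (2 : ℝ) ^ j ≤ s := not_lt.1 (Nat.find_min hex (by omega))
    have hsq : (4 : ℝ) ^ j ≤ s ^ 2 := by
      calc (4 : ℝ) ^ j = (2 ^ j) ^ 2 := by rw [← pow_mul, mul_comm, pow_mul]; norm_num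
        _ ≤ s ^ 2 := pow_le_pow_left₀ (by positivity) hjs 2
    rw [pow_succ (4 : ℝ)]
    linarith

lemma summable_exp_mul_two_pow_rpow (β : ℝ) :
    Summable fun k : ℕ => Real.exp ((1 - 4 ^ k) / 16) * ((2 : ℝ) ^ k) ^ β := by
  set f := fun k : ℕ => Real.exp ((1 - 4 ^ k) / 16) * ((2 : ℝ) ^ k) ^ β
  have hratio : ∀ k, f (k + 1) = f k * (2 ^ β * Real.exp (-(3 * 4 ^ k / 16))) := by
    intro k
    simp only [f, pow_succ, Real.mul_rpow (by positivity : (0 : ℝ) ≤ 2 ^ k) zero_le_two]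
    rw [show (1 - 4 ^ k * 4 : ℝ) / 16 = (1 - 4 ^ k) / 16 + -(3 * 4 ^ k / 16) by ring, Real.exp_add]
    ring
  have hratio_lim : Tendsto (fun k : ℕ => (2 : ℝ) ^ β * Real.exp (-(3 * 4 ^ k / 16))) atTop (𝓝 0) := by
    have h4 : Tendsto (fun k : ℕ => (3 : ℝ) * 4 ^ k / 16) atTop atTop :=
      ((tendsto_pow_atTop_atTop_of_one_lt (by norm_num)).const_mul_atTop (by norm_num)).atTop_div_const
        (by norm_num)
    simpa using (Real.tendsto_exp_neg_atTop_nhds_zero.comp h4).const_mul ((2 : ℝ) ^ β)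
  refine summable_of_ratio_norm_eventually_le (r := 1 / 2) (by norm_num) ?_
  filter_upwards [hratio_lim.eventually_lt_const (by norm_num : (0 : ℝ) < 1 / 2)] with k hk
  have hf : 0 ≤ f k := by positivity
  rw [hratio, Real.norm_of_nonneg (by positivity), Real.norm_of_nonneg hf, mul_comm (1 / 2)]
  exact mul_le_mul_of_nonneg_left hk.le hf

lemma tendsto_rpow_mul_exp_neg_div_nhdsGT_zero (s : ℝ) {b : ℝ} (hb : 0 < b) :
    Tendsto (fun t : ℝ => t ^ s * Real.exp (-b / t)) (𝓝[>] 0) (𝓝 0) := by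
  refine ((tendsto_rpow_mul_exp_neg_mul_atTop_nhds_zero (-s) b hb).comp
    tendsto_inv_nhdsGT_zero).congr' ?_
  filter_upwards [self_mem_nhdsWithin] with t (ht : 0 < t)
  simp only [Function.comp_apply, Real.inv_rpow ht.le, ← Real.rpow_neg ht.le, neg_neg,
    neg_mul, div_eq_mul_inv]

section GaussianWeight

variable {X : Type*} [PseudoMetricSpace X]

noncomputable def gaussianWeight (x : X) (t : ℝ) (ξ : X) : ℝ≥0∞ :=
  ENNReal.ofReal (Real.exp (-dist x ξ ^ 2 / (4 * t)))

lemma gaussianWeight_le_tsum_indicator_ball (x : X) {t : ℝ} (ht : 0 < t) (ξ : X) :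
    gaussianWeight x t ξ ≤ ∑' k : ℕ, (ball x (2 ^ k * √t)).indicator
      (fun _ => ENNReal.ofReal (Real.exp ((1 - 4 ^ k) / 16))) ξ := by
  obtain ⟨k, hk, hexp⟩ := exists_lt_two_pow_and_exp_le (dist x ξ / √t)
  have hsqrt : 0 < √t := Real.sqrt_pos.2 ht
  have hξ : ξ ∈ ball x (2 ^ k * √t) := by
    rw [mem_ball']
    rwa [div_lt_iff₀ hsqrt] at hk
  refine le_trans ?_ (ENNReal.le_tsum k)
  rw [indicator_of_mem hξ, gaussianWeight]
  refine ENNReal.ofReal_le_ofReal (le_trans (le_of_eq ?_) hexp)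
  rw [div_pow, Real.sq_sqrt ht.le]
  ring_nf


variable [MeasurableSpace X]

lemma measure_ball_inter_ball_le {μ : Measure X} {x : X} {β r₀ ρ : ℝ} {ε : ℝ≥0∞}
    (hβ : 0 ≤ β) (hr₀ : 0 < r₀) (hρ : 0 < ρ)
    (hμ : ∀ r ∈ Ioc 0 r₀, μ (ball x r) ≤ ε * ENNReal.ofReal (r ^ β)) :
    μ (ball x ρ ∩ ball x r₀) ≤ ε * ENNReal.ofReal (ρ ^ β) := by
  have hmin : 0 < min ρ r₀ := lt_min hρ hr₀
  calc μ (ball x ρ ∩ ball x r₀) ≤ μ (ball x (min ρ r₀)) :=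
        measure_mono fun ξ hξ => mem_ball.2 (lt_min hξ.1 hξ.2)
    _ ≤ ε * ENNReal.ofReal (min ρ r₀ ^ β) := hμ _ ⟨hmin, min_le_right _ _⟩
    _ ≤ ε * ENNReal.ofReal (ρ ^ β) := by
        gcongr
        exact min_le_left _ _

variable [OpensMeasurableSpace X]

lemma setLIntegral_ball_gaussianWeight_le (μ : Measure X) (x : X) {β r₀ t : ℝ} {ε : ℝ≥0∞}
    (hβ : 0 ≤ β) (hr₀ : 0 < r₀) (ht : 0 < t)
    (hμ : ∀ r ∈ Ioc 0 r₀, μ (ball x r) ≤ ε * ENNReal.ofReal (r ^ β)) :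
    ∫⁻ ξ in ball x r₀, gaussianWeight x t ξ ∂μ ≤
      ε * (∑' k : ℕ, ENNReal.ofReal (Real.exp ((1 - 4 ^ k) / 16) * ((2 : ℝ) ^ k) ^ β)) *
        ENNReal.ofReal (t ^ (β / 2)) := by
  have hscale : ∀ k : ℕ, ((2 : ℝ) ^ k * √t) ^ β = ((2 : ℝ) ^ k) ^ β * t ^ (β / 2) := by
    intro k
    rw [Real.mul_rpow (by positivity) (Real.sqrt_nonneg t), Real.sqrt_eq_rpow,
      ← Real.rpow_mul ht.le, one_div_mul_eq_div]
  calc ∫⁻ ξ in ball x r₀, gaussianWeight x t ξ ∂μ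
      ≤ ∫⁻ ξ in ball x r₀, ∑' k : ℕ, (ball x (2 ^ k * √t)).indicator
          (fun _ => ENNReal.ofReal (Real.exp ((1 - 4 ^ k) / 16))) ξ ∂μ :=
        lintegral_mono (gaussianWeight_le_tsum_indicator_ball x ht)
    _ = ∑' k : ℕ, ENNReal.ofReal (Real.exp ((1 - 4 ^ k) / 16)) *
          μ (ball x (2 ^ k * √t) ∩ ball x r₀) := by
        rw [lintegral_tsum fun k => (aemeasurable_const.indicator measurableSet_ball)]
        simp only [lintegral_indicator_const measurableSet_ball,
          Measure.restrict_apply measurableSet_ball]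
    _ ≤ ∑' k : ℕ, ENNReal.ofReal (Real.exp ((1 - 4 ^ k) / 16)) *
          (ε * ENNReal.ofReal (((2 : ℝ) ^ k * √t) ^ β)) := by
        gcongr with k
        exact measure_ball_inter_ball_le hβ hr₀ (by positivity) hμ
    _ = ε * (∑' k : ℕ, ENNReal.ofReal (Real.exp ((1 - 4 ^ k) / 16) * ((2 : ℝ) ^ k) ^ β)) *
          ENNReal.ofReal (t ^ (β / 2)) := by
        rw [← ENNReal.tsum_mul_left, ← ENNReal.tsum_mul_right]
        congr 1 with k
        rw [hscale, ENNReal.ofReal_mul (by positivity), ENNReal.ofReal_mul (by positivity)]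
        ring

lemma setLIntegral_compl_ball_gaussianWeight_le (μ : Measure X) (x : X) {r₀ t : ℝ}
    (hr₀ : 0 ≤ r₀) (ht : 0 < t) (ht' : t ≤ 1 / 8) :
    ∫⁻ ξ in (ball x r₀)ᶜ, gaussianWeight x t ξ ∂μ ≤
      ENNReal.ofReal (Real.exp (-r₀ ^ 2 / (8 * t))) * ∫⁻ ξ, gaussianWeight x (1 / 4) ξ ∂μ := by
  have hmeas : Measurable (gaussianWeight x (1 / 4) : X → ℝ≥0∞) := by
    unfold gaussianWeight
    fun_prop
  calc ∫⁻ ξ in (ball x r₀)ᶜ, gaussianWeight x t ξ ∂μ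
      ≤ ∫⁻ ξ in (ball x r₀)ᶜ, ENNReal.ofReal (Real.exp (-r₀ ^ 2 / (8 * t))) *
          gaussianWeight x (1 / 4) ξ ∂μ := by
        refine setLIntegral_mono (hmeas.const_mul _) fun ξ hξ => ?_
        have hr : r₀ ^ 2 ≤ dist x ξ ^ 2 :=
          pow_le_pow_left₀ hr₀ (by simpa [mem_ball, dist_comm] using hξ) 2
        have hd : dist x ξ ^ 2 ≤ dist x ξ ^ 2 / (8 * t) :=
          le_div_self (by positivity) (by positivity) (by linarith)
        rw [gaussianWeight, gaussianWeight, ← ENNReal.ofReal_mul (Real.exp_nonneg _),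
          ← Real.exp_add]
        refine ENNReal.ofReal_le_ofReal (Real.exp_le_exp.2 ?_)
        have hr' : r₀ ^ 2 / (8 * t) ≤ dist x ξ ^ 2 / (8 * t) := by gcongr
        have hsplit : dist x ξ ^ 2 / (4 * t) = dist x ξ ^ 2 / (8 * t) + dist x ξ ^ 2 / (8 * t) := by
          field_simp
          ring
        rw [neg_div, neg_div, neg_div, hsplit, show (4 : ℝ) * (1 / 4) = 1 by norm_num, div_one]
        linarith
    _ ≤ ENNReal.ofReal (Real.exp (-r₀ ^ 2 / (8 * t))) * ∫⁻ ξ, gaussianWeight x (1 / 4) ξ ∂μ := by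
        rw [lintegral_const_mul' _ _ ENNReal.ofReal_ne_top]
        exact mul_le_mul_right (setLIntegral_le_lintegral _ _) _

theorem tendsto_rpow_neg_mul_lintegral_gaussianWeight (μ : Measure X) (x : X) {β : ℝ}
    (hβ : 0 ≤ β) (hfin : ∫⁻ ξ, gaussianWeight x (1 / 4) ξ ∂μ ≠ ⊤)
    (hx : limsup (fun r : ℝ => μ (ball x r) / ENNReal.ofReal (r ^ β)) (𝓝[>] 0) = 0) :
    Tendsto (fun t : ℝ => ENNReal.ofReal (t ^ (-β / 2)) * ∫⁻ ξ, gaussianWeight x t ξ ∂μ)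
      (𝓝[>] 0) (𝓝 0) := by
  set C := ∑' k : ℕ, ENNReal.ofReal (Real.exp ((1 - 4 ^ k) / 16) * ((2 : ℝ) ^ k) ^ β)
  have hC : C ≠ ⊤ := by
    simp only [C, ← ENNReal.ofReal_tsum_of_nonneg (fun k => by positivity)
      (summable_exp_mul_two_pow_rpow β)]
    exact ENNReal.ofReal_ne_top
  rw [ENNReal.tendsto_nhds_zero]
  intro ε hε
  obtain ⟨η, hη, hηC⟩ := ENNReal.exists_nnreal_pos_mul_lt hC (ENNReal.half_pos hε.ne').ne'
  have hsmall : ∀ᶠ r in 𝓝[>] (0 : ℝ), μ (ball x r) / ENNReal.ofReal (r ^ β) < η :=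
    eventually_lt_of_limsup_lt (hx ▸ ENNReal.coe_pos.2 hη)
  obtain ⟨r₀, hr₀ : 0 < r₀, hr₀sub⟩ := mem_nhdsGT_iff_exists_Ioc_subset.1 hsmall
  have hμ : ∀ r ∈ Ioc 0 r₀, μ (ball x r) ≤ η * ENNReal.ofReal (r ^ β) := fun r hr =>
    (ENNReal.div_le_iff (ENNReal.ofReal_pos.2 (Real.rpow_pos_of_pos hr.1 β)).ne'
      ENNReal.ofReal_ne_top).1 (hr₀sub hr).le
  have htail : Tendsto (fun t : ℝ => ENNReal.ofReal (t ^ (-β / 2) * Real.exp (-(r₀ ^ 2 / 8) / t)) *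
      ∫⁻ ξ, gaussianWeight x (1 / 4) ξ ∂μ) (𝓝[>] 0) (𝓝 0) := by
    simpa using ENNReal.Tendsto.mul_const (ENNReal.tendsto_ofReal
      (tendsto_rpow_mul_exp_neg_div_nhdsGT_zero (-β / 2) (by positivity : 0 < r₀ ^ 2 / 8)))
      (Or.inr hfin)
  filter_upwards [self_mem_nhdsWithin, Ioc_mem_nhdsGT (by norm_num : (0 : ℝ) < 1 / 8),
    htail.eventually_le_const (ENNReal.half_pos hε.ne')] with t (ht : 0 < t) ht' htail_le
  have hcancel : ENNReal.ofReal (t ^ (-β / 2)) * ENNReal.ofReal (t ^ (β / 2)) = 1 := by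
    rw [← ENNReal.ofReal_mul (by positivity), ← Real.rpow_add ht, neg_div, neg_add_cancel,
      Real.rpow_zero, ENNReal.ofReal_one]
  calc ENNReal.ofReal (t ^ (-β / 2)) * ∫⁻ ξ, gaussianWeight x t ξ ∂μ
      = ENNReal.ofReal (t ^ (-β / 2)) * (∫⁻ ξ in ball x r₀, gaussianWeight x t ξ ∂μ +
          ∫⁻ ξ in (ball x r₀)ᶜ, gaussianWeight x t ξ ∂μ) := by
        rw [lintegral_add_compl _ measurableSet_ball]
    _ ≤ ENNReal.ofReal (t ^ (-β / 2)) * (η * C * ENNReal.ofReal (t ^ (β / 2)) +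
          ENNReal.ofReal (Real.exp (-r₀ ^ 2 / (8 * t))) * ∫⁻ ξ, gaussianWeight x (1 / 4) ξ ∂μ) := by
        gcongr
        · exact setLIntegral_ball_gaussianWeight_le μ x hβ hr₀ ht hμ
        · exact setLIntegral_compl_ball_gaussianWeight_le μ x hr₀.le ht ht'.2
    _ = η * C + ENNReal.ofReal (t ^ (-β / 2) * Real.exp (-(r₀ ^ 2 / 8) / t)) *
          ∫⁻ ξ, gaussianWeight x (1 / 4) ξ ∂μ := by
        rw [show -r₀ ^ 2 / (8 * t) = -(r₀ ^ 2 / 8) / t by ring, mul_add, mul_left_comm,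
          hcancel, mul_one, ENNReal.ofReal_mul (by positivity), mul_assoc]
    _ ≤ ε / 2 + ε / 2 := add_le_add hηC.le htail_le
    _ = ε := ENNReal.add_halves ε

end GaussianWeight

lemma lintegral_heatK_eq (n : ℕ) (μ : Measure (EuclideanSpace ℝ (Fin n)))
    (x : EuclideanSpace ℝ (Fin n)) {t : ℝ} (ht : 0 ≤ t) :
    ∫⁻ ξ, ENNReal.ofReal (heatK n (x - ξ) t) ∂μ =
      ENNReal.ofReal ((4 * Real.pi * t) ^ (-(n : ℝ) / 2)) * ∫⁻ ξ, gaussianWeight x t ξ ∂μ := by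
  simp only [heatK, gaussianWeight, ← dist_eq_norm,
    ENNReal.ofReal_mul (Real.rpow_nonneg (by positivity : 0 ≤ 4 * Real.pi * t) _)]
  exact lintegral_const_mul' _ _ ENNReal.ofReal_ne_top

theorem stmt17 (n : ℕ) (α : ℝ) (hα : α ∈ Ico (0 : ℝ) n)
    (μ : Measure (EuclideanSpace ℝ (Fin n)))
    (hfin : ∀ (x : EuclideanSpace ℝ (Fin n)) (t : ℝ), 0 < t →
      (∫⁻ ξ, ENNReal.ofReal (heatK n (x - ξ) t) ∂μ) ≠ ⊤)
    (x : EuclideanSpace ℝ (Fin n))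
    (hx : limsup (fun r : ℝ => μ (ball x r) / ENNReal.ofReal (r ^ ((n : ℝ) - α)))
        (nhdsWithin 0 (Ioi 0)) = 0) :
    Tendsto (fun t : ℝ =>
        t ^ (α / 2) * (∫⁻ ξ, ENNReal.ofReal (heatK n (x - ξ) t) ∂μ).toReal)
      (nhdsWithin 0 (Ioi 0)) (nhds 0) := by
  have hfin' : ∫⁻ ξ, gaussianWeight x (1 / 4) ξ ∂μ ≠ ⊤ := by
    intro htop
    apply hfin x (1 / 4) (by norm_num)
    rw [lintegral_heatK_eq n μ x (by norm_num), htop,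
      ENNReal.mul_top (ENNReal.ofReal_pos.2 (by positivity)).ne']
  have hlim := ENNReal.Tendsto.const_mul (a := ENNReal.ofReal ((4 * Real.pi) ^ (-(n : ℝ) / 2)))
    (tendsto_rpow_neg_mul_lintegral_gaussianWeight μ x (sub_nonneg.2 hα.2.le) hfin' hx)
    (Or.inr ENNReal.ofReal_ne_top)
  rw [mul_zero] at hlim
  refine ((ENNReal.tendsto_toReal ENNReal.zero_ne_top).comp hlim).congr' ?_
  filter_upwards [self_mem_nhdsWithin] with t (ht : 0 < t)
  have hpow : t ^ (-((n : ℝ) - α) / 2) = t ^ (α / 2) * t ^ (-(n : ℝ) / 2) := by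
    rw [← Real.rpow_add ht]
    ring_nf
  rw [Function.comp_apply, lintegral_heatK_eq n μ x ht.le, hpow,
    Real.mul_rpow (by positivity) ht.le]
  simp only [ENNReal.toReal_mul]
  rw [ENNReal.toReal_ofReal, ENNReal.toReal_ofReal, ENNReal.toReal_ofReal]
  · ring
  all_goals positivity
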